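/- (Theorem 1, first layer, necessity) Let $G = \mathbb{Z}_2 \times \mathbb{Z}_2$. Suppose a linear map $\tilde{\Phi}: \mathbb{R}^2 \to (\mathbb{R}^D)^G$, given by $[\tilde{\Phi}(n,t)](g) = \widetilde{\mathbf{W}}_1(g) n + \widetilde{\mathbf{W}}_2(g) t$ for functions $\widetilde{\mathbf{W}}_1, \widetilde{\mathbf{W}}_2: G \to \mathbb{R}^D$, is $G$-equivariant with respect to the actions $T_h(n,t) = ((-1)^{h_1}n, (-1)^{h_2}t)$ on the domain and $(T_h f)(g) = f(g-h)$ on the codomain. Then $\widetilde{\mathbf{W}}_1(g) = (-1)^{g_1}\widetilde{\mathbf{W}}_1(0,0)$ and $\widetilde{\mathbf{W}}_2(g) = (-1)^{g_2}\widetilde{\mathbf{W}}_2(0,0)$ for all $g = (g_1,g_2) \in G$. -/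

import Mathlib

theorem first_layer_necessity (D : ℕ) (W1 W2 : (ZMod 2 × ZMod 2) → (Fin D → ℝ))
    (Φ : ℝ → ℝ → (ZMod 2 × ZMod 2) → (Fin D → ℝ))
    (hΦ : ∀ (n t : ℝ) (g : ZMod 2 × ZMod 2),
      Φ n t g = fun i => W1 g i * n + W2 g i * t)
    (hequiv : ∀ (n t : ℝ) (g h : ZMod 2 × ZMod 2),
      Φ ((-1 : ℝ) ^ h.1.val * n) ((-1 : ℝ) ^ h.2.val * t) g = Φ n t (g - h)) :
    ∀ (g : ZMod 2 × ZMod 2),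
      (W1 g = fun i => (-1 : ℝ) ^ g.1.val * W1 (0, 0) i) ∧
      (W2 g = fun i => (-1 : ℝ) ^ g.2.val * W2 (0, 0) i) := by
  intro g
  have hgg : g - g = (0, 0) := by simp [Prod.ext_iff]
  have sq : ∀ k : ℕ, ((-1 : ℝ) ^ k) * ((-1 : ℝ) ^ k) = 1 := by
    intro k
    rw [← pow_add]
    exact Even.neg_one_pow ⟨k, rfl⟩
  constructor
  · have h1 := hequiv 1 0 g g
    rw [hgg, hΦ, hΦ] at h1
    funext i
    have := congrFun h1 i
    simp at this
    have h2 : (-1 : ℝ) ^ g.1.val * ((-1 : ℝ) ^ g.1.val * W1 g i)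
        = (-1 : ℝ) ^ g.1.val * W1 (0, 0) i := by rw [← this]; ring
    rw [← mul_assoc, sq, one_mul] at h2
    exact h2
  · have h1 := hequiv 0 1 g g
    rw [hgg, hΦ, hΦ] at h1
    funext i
    have := congrFun h1 i
    simp at this
    have h2 : (-1 : ℝ) ^ g.2.val * ((-1 : ℝ) ^ g.2.val * W2 g i)
        = (-1 : ℝ) ^ g.2.val * W2 (0, 0) i := by rw [← this]; ring
    rw [← mul_assoc, sq, one_mul] at h2
    exact h2
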